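/- arXiv:1602.06331 — 3 statements merged into one kernel-verified Lean document; each statement's English description precedes it below -/
import Mathlib

section
/- If f, g : ℝ → ℝ are smooth functions, then the metric g_{αβ}(x) = f(s)η_{αβ} + (g(s)−f(s))x_αx_β/s (with s = xᵀηx ≠ 0) satisfies the Lorentz Killing equations g_{αε}η_{βδ} − g_{αδ}η_{βε} + g_{βε}η_{αδ} − g_{βδ}η_{αε} + x_δ∂_ε g_{αβ} − x_ε∂_δ g_{αβ} = 0. -/
noncomputable section
open Matrix BigOperators Real Filter Topology

/-- Minkowski metric diag(+1, -1, ..., -1) on `ℝⁿ`. -/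
def eta (n : ℕ) : Matrix (Fin n) (Fin n) ℝ :=
  Matrix.diagonal (fun i => if (i : ℕ) = 0 then 1 else -1)

/-- `s = xᵀ η x`. -/
def sfun {n : ℕ} (x : Fin n → ℝ) : ℝ := x ⬝ᵥ (eta n).mulVec x

/-- Lowered vector `x_α = η_{αβ} x^β`. -/
def xlow {n : ℕ} (x : Fin n → ℝ) : Fin n → ℝ := (eta n).mulVec x

/-- Transverse projector `Π⊥_{αβ} = η_{αβ} - x_α x_β / s`. -/
def Pperp {n : ℕ} (x : Fin n → ℝ) : Matrix (Fin n) (Fin n) ℝ :=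
  fun α β => eta n α β - xlow x α * xlow x β / sfun x

/-- Longitudinal projector `Π∥_{αβ} = x_α x_β / s`. -/
def Ppar {n : ℕ} (x : Fin n → ℝ) : Matrix (Fin n) (Fin n) ℝ :=
  fun α β => xlow x α * xlow x β / sfun x

/-- Partial derivative `∂_α F` at `x`. -/
def pd {n : ℕ} (α : Fin n) (F : (Fin n → ℝ) → ℝ) (x : Fin n → ℝ) : ℝ :=
  fderiv ℝ F x (Pi.single α 1)

/-- The Lorentz invariant metric `g_{αβ}(x) = f(s) η_{αβ} + (g(s) - f(s)) x_α x_β / s`. -/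
def Gmet {n : ℕ} (f g : ℝ → ℝ) (x : Fin n → ℝ) : Matrix (Fin n) (Fin n) ℝ :=
  fun α β => f (sfun x) * eta n α β + (g (sfun x) - f (sfun x)) * xlow x α * xlow x β / sfun x

def dcoef {n : ℕ} (i : Fin n) : ℝ := if (i : ℕ) = 0 then 1 else -1

lemma xlow_eq {n : ℕ} (x : Fin n → ℝ) (i : Fin n) : xlow x i = dcoef i * x i := by
  simp [xlow, eta, dcoef, mulVec_diagonal]

lemma sfun_eq {n : ℕ} (x : Fin n → ℝ) : sfun x = ∑ i, dcoef i * (x i * x i) := by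
  simp [sfun, eta, dcoef, dotProduct, mulVec_diagonal]

lemma eta_apply {n : ℕ} (i j : Fin n) : eta n i j = if i = j then dcoef i else 0 := by
  simp [eta, dcoef, Matrix.diagonal_apply]

lemma hasFDerivAt_sfun {n : ℕ} (x : Fin n → ℝ) :
    HasFDerivAt (sfun (n := n))
      (∑ i, (2 * dcoef i * x i) • ContinuousLinearMap.proj (R := ℝ) (φ := fun _ : Fin n => ℝ) i) x := by
  have h : ∀ i : Fin n, HasFDerivAt (fun y : Fin n → ℝ => dcoef i * (y i * y i))
      ((2 * dcoef i * x i) • ContinuousLinearMap.proj (R := ℝ) (φ := fun _ : Fin n => ℝ) i) x := by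
    intro i
    have hp : HasFDerivAt (fun y : Fin n → ℝ => y i)
        (ContinuousLinearMap.proj (R := ℝ) (φ := fun _ : Fin n => ℝ) i) x := hasFDerivAt_apply i x
    have := (hp.fun_mul hp).const_mul (dcoef i)
    refine this.congr_fderiv ?_
    ext v
    simp
    ring
  have hsum := HasFDerivAt.fun_sum (u := Finset.univ) (fun i _ => h i)
  have heq : (sfun (n := n)) = fun y => ∑ i, dcoef i * (y i * y i) := funext fun y => sfun_eq y
  rw [heq]
  exact hsum

lemma hasFDerivAt_xlow {n : ℕ} (x : Fin n → ℝ) (a : Fin n) :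
    HasFDerivAt (fun y : Fin n → ℝ => xlow y a)
      (dcoef a • ContinuousLinearMap.proj (R := ℝ) (φ := fun _ : Fin n => ℝ) a) x := by
  have heq : (fun y : Fin n → ℝ => xlow y a) = fun y => dcoef a * y a :=
    funext fun y => xlow_eq y a
  rw [heq]
  exact (hasFDerivAt_apply a x).const_mul (dcoef a)

lemma pd_Gmet {n : ℕ} (f g : ℝ → ℝ) (hf : ContDiff ℝ (⊤ : ℕ∞) f) (hg : ContDiff ℝ (⊤ : ℕ∞) g)
    (x : Fin n → ℝ) (hs : sfun x ≠ 0) (α β ε : Fin n) :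
    pd ε (fun y => Gmet f g y α β) x =
      2 * deriv f (sfun x) * xlow x ε * eta n α β
      + (2 * (deriv g (sfun x) - deriv f (sfun x)) * xlow x ε * xlow x α * xlow x β) / sfun x
      + (g (sfun x) - f (sfun x)) * (eta n α ε * xlow x β + xlow x α * eta n β ε) / sfun x
      - (2 * (g (sfun x) - f (sfun x)) * xlow x α * xlow x β * xlow x ε) / sfun x ^ 2 := by
  have hS := hasFDerivAt_sfun x
  have hfs : HasFDerivAt (fun y : Fin n → ℝ => f (sfun y))
      (deriv f (sfun x) • (∑ i, (2 * dcoef i * x i) • ContinuousLinearMap.proj (R := ℝ) (φ := fun _ : Fin n => ℝ) i)) x :=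
    ((hf.differentiable (by simp)).differentiableAt.hasDerivAt).comp_hasFDerivAt x hS
  have hgs : HasFDerivAt (fun y : Fin n → ℝ => g (sfun y))
      (deriv g (sfun x) • (∑ i, (2 * dcoef i * x i) • ContinuousLinearMap.proj (R := ℝ) (φ := fun _ : Fin n => ℝ) i)) x :=
    ((hg.differentiable (by simp)).differentiableAt.hasDerivAt).comp_hasFDerivAt x hS
  have hA := hfs.mul_const (eta n α β)
  have hnum := ((hgs.fun_sub hfs).fun_mul (hasFDerivAt_xlow x α)).fun_mul (hasFDerivAt_xlow x β)
  have hinv := (hasDerivAt_inv hs).comp_hasFDerivAt x hS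
  have hdiv := hnum.fun_mul hinv
  have htot := hA.fun_add hdiv
  simp only [Function.comp_def] at htot
  have hG : (fun y => Gmet f g y α β)
      = fun y : Fin n → ℝ => f (sfun y) * eta n α β
          + (g (sfun y) - f (sfun y)) * xlow y α * xlow y β * (sfun y)⁻¹ := by
    funext y; simp [Gmet, div_eq_mul_inv]
  rw [pd, hG, htot.fderiv]
  simp only [ContinuousLinearMap.add_apply, ContinuousLinearMap.smul_apply,
    ContinuousLinearMap.sub_apply, ContinuousLinearMap.coe_sub', ContinuousLinearMap.coe_smul',
    Pi.smul_apply, Pi.sub_apply, ContinuousLinearMap.sum_apply,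
    ContinuousLinearMap.proj_apply, smul_eq_mul]
  simp only [Pi.single_apply, eta_apply, xlow_eq, mul_ite, ite_mul, mul_zero, zero_mul,
    mul_one, Finset.sum_ite_eq, Finset.sum_ite_eq', Finset.mem_univ, if_true]
  split_ifs <;> field_simp <;> ring

/-- For smooth `f, g`, the Lorentz invariant metric satisfies the Lorentz Killing
equations (2) of the paper on `{s ≠ 0}`. -/
theorem lorentz_metric_killing {n : ℕ} (f g : ℝ → ℝ)
    (hf : ContDiff ℝ (⊤ : ℕ∞) f) (hg : ContDiff ℝ (⊤ : ℕ∞) g)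
    (x : Fin n → ℝ) (hs : sfun x ≠ 0) (ε δ α β : Fin n) :
    Gmet f g x α ε * eta n β δ - Gmet f g x α δ * eta n β ε
      + Gmet f g x β ε * eta n α δ - Gmet f g x β δ * eta n α ε
      + xlow x δ * pd ε (fun y => Gmet f g y α β) x
      - xlow x ε * pd δ (fun y => Gmet f g y α β) x = 0 := by
  rw [pd_Gmet f g hf hg x hs α β ε, pd_Gmet f g hf hg x hs α β δ]
  simp only [Gmet]
  field_simp
  ring
end
end

section
/- If f and g are smooth nonvanishing functions of s satisfying the first constant-curvature ODE (f+f′s)²/(sg) − f/s = −(2K/(n(n−1)))f², i.e. g = (f+f′s)²/(f(1 − 2Kfs/(n(n−1)))), then the second ODE 2(f+f′s)′ − (f′/f + g′/g)(f+f′s) = −(2K/(n(n−1)))fg holds automatically. -/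
noncomputable section

/-- If smooth nonvanishing `f, g` satisfy the first constant-curvature ODE, i.e.
`g = (f+f's)²/(f(1 - 2Kfs/(n(n-1))))`, then the second ODE
`2(f+f's)' - (f'/f + g'/g)(f+f's) = -(2K/(n(n-1))) f g` holds automatically. -/
theorem second_ode_automatic {n : ℕ} (hn : 2 ≤ n) (K : ℝ) (f g : ℝ → ℝ)
    (hf : ContDiff ℝ (⊤ : ℕ∞) f) (hg : ContDiff ℝ (⊤ : ℕ∞) g)
    (hfpos : ∀ t, 0 < f t) (hg0 : ∀ t, g t ≠ 0)
    (hden : ∀ t, 1 - 2 * K * f t * t / (n * (n - 1)) ≠ 0)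
    (hfirst : ∀ t : ℝ,
      g t = (f t + deriv f t * t) ^ 2 / (f t * (1 - 2 * K * f t * t / (n * (n - 1))))) :
    ∀ t : ℝ,
      2 * deriv (fun u => f u + deriv f u * u) t
        - (deriv f t / f t + deriv g t / g t) * (f t + deriv f t * t)
        = -(2 * K / (n * (n - 1))) * f t * g t := by
  intro t
  obtain ⟨c, hc⟩ : ∃ c : ℝ, c = 2 * K / ((n : ℝ) * ((n : ℝ) - 1)) := ⟨_, rfl⟩
  have hfd : Differentiable ℝ f := hf.differentiable (by simp)
  have hfd' : Differentiable ℝ (deriv f) :=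
    ((contDiff_infty_iff_deriv.mp (hf.of_le (by simp))).2).differentiable (by simp)
  have hgd : Differentiable ℝ g := hg.differentiable (by simp)
  -- basic nonvanishing
  have ha : f t ≠ 0 := (hfpos t).ne'
  have hb : g t ≠ 0 := hg0 t
  have hdconv : ∀ u : ℝ, 2 * K * f u * u / ((n:ℝ) * ((n:ℝ) - 1)) = c * (f u * u) := by
    intro u; rw [hc]; ring
  have hd : (1 : ℝ) - c * (f t * t) ≠ 0 := by
    have := hden t; rwa [hdconv t] at this
  -- rewrite the first ODE as a polynomial identity
  have h1 : ∀ u : ℝ, (f u + deriv f u * u) ^ 2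
      = g u * (f u * (1 - c * (f u * u))) := by
    intro u
    have hau : f u ≠ 0 := (hfpos u).ne'
    have hdu : (1 : ℝ) - c * (f u * u) ≠ 0 := by
      have := hden u; rwa [hdconv u] at this
    have := hfirst u
    rw [hdconv u] at this
    field_simp [this]
    have hcan := div_mul_cancel₀ ((f u + deriv f u * u) ^ 2) (mul_ne_zero hau hdu)
    linear_combination (-(f u * (1 - c * (f u * u)))) * this - hcan
  -- F differentiable
  have hFdiff : Differentiable ℝ (fun u => f u + deriv f u * u) :=
    hfd.add (hfd'.mul differentiable_id)
  -- derivative of LHS of h1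
  have hL : HasDerivAt (fun u => (f u + deriv f u * u) ^ 2)
      (2 * (f t + deriv f t * t) ^ 1 * deriv (fun u => f u + deriv f u * u) t) t :=
    ((hFdiff t).hasDerivAt).pow 2
  -- derivative of RHS of h1
  have hD : HasDerivAt (fun u => (1 : ℝ) - c * (f u * u))
      (0 - (0 * (f t * t) + c * (deriv f t * t + f t * 1))) t :=
    (hasDerivAt_const t 1).sub ((hasDerivAt_const t c).mul
      (((hfd t).hasDerivAt).mul (hasDerivAt_id t)))
  have hR : HasDerivAt (fun u => g u * (f u * (1 - c * (f u * u))))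
      (deriv g t * (f t * (1 - c * (f t * t)))
        + g t * (deriv f t * (1 - c * (f t * t))
            + f t * (0 - (0 * (f t * t) + c * (deriv f t * t + f t * 1))))) t :=
    ((hgd t).hasDerivAt).mul (((hfd t).hasDerivAt).mul hD)
  have he : (fun u => (f u + deriv f u * u) ^ 2)
      = fun u => g u * (f u * (1 - c * (f u * u))) := funext h1
  rw [he] at hL
  have h2 := hL.unique hR
  -- abbreviations
  set a := f t
  set a' := deriv f t
  set b := g t
  set b' := deriv g t
  set F := a + a' * t with hFdef
  set F' := deriv (fun u => f u + deriv f u * u) t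
  have h1t : F ^ 2 = b * (a * (1 - c * (a * t))) := h1 t
  have hF0 : F ≠ 0 := by
    have hne : b * (a * (1 - c * (a * t))) ≠ 0 :=
      mul_ne_zero hb (mul_ne_zero ha hd)
    intro h0
    apply hne
    rw [← h1t, h0]
    ring
  -- goal rewrite of RHS constant
  have hgoalc : -(2 * K / ((n:ℝ) * ((n:ℝ) - 1))) * a * b = -c * a * b := by rw [hc]
  rw [hgoalc]
  have key : (2 * F' - (a' / a + b' / b) * F) * (a * b * F)
      = (-c * a * b) * (a * b * F) := by
    have expand : (2 * F' - (a' / a + b' / b) * F) * (a * b * F)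
        = 2 * F' * a * b * F - a' * b * F ^ 2 - b' * a * F ^ 2 := by
      field_simp
      ring
    rw [expand]
    linear_combination (a * b) * h2 - (a' * b + b' * a) * h1t
  have habF : a * b * F ≠ 0 := mul_ne_zero (mul_ne_zero ha hb) hF0
  exact mul_right_cancel₀ habF key
end
end

section
/- For the Lorentz invariant metric g_{αβ} = fΠ⊥_{αβ} + gΠ∥_{αβ}, the vacuum Einstein equations R_{αβ} = Λg_{αβ} are equivalent to the constant curvature equations (f+f′s)²/(sg) − f/s = −(2K/(n(n−1)))f² and 2(f+f′s)′ − (f′/f + g′/g)(f+f′s) = −(2K/(n(n−1)))fg with Λ = −2K/n. In particular, every Lorentz invariant vacuum solution has constant curvature. -/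
noncomputable section
open Matrix BigOperators Real Filter Topology

/-- The Lorentz invariant metric `g_{αβ} = f(s) Π⊥_{αβ} + g(s) Π∥_{αβ}`. -/
def Gfield {n : ℕ} (f g : ℝ → ℝ) (x : Fin n → ℝ) : Matrix (Fin n) (Fin n) ℝ :=
  f (sfun x) • Pperp x + g (sfun x) • Ppar x

/-- The inverse metric `g^{αβ} = (1/f) Π⊥^{αβ} + (1/g) Π∥^{αβ}`. -/
def Ginvfield {n : ℕ} (f g : ℝ → ℝ) (x : Fin n → ℝ) : Matrix (Fin n) (Fin n) ℝ :=
  (1 / f (sfun x)) • ((eta n)⁻¹ * Pperp x * (eta n)⁻¹)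
    + (1 / g (sfun x)) • ((eta n)⁻¹ * Ppar x * (eta n)⁻¹)

/-- Coefficient of `Π⊥_{αβ}` in the Ricci tensor (14) of the paper. -/
def RicPerp (n : ℕ) (f g : ℝ → ℝ) (t : ℝ) : ℝ :=
  ((n : ℝ) - 2) / t * ((f t + deriv f t * t) ^ 2 / (f t * g t) - 1)
    + 2 * deriv (fun u => f u + deriv f u * u) t / g t
    - (deriv f t / f t + deriv g t / g t) * (f t + deriv f t * t) / g t

/-- Coefficient of `Π∥_{αβ}` in the Ricci tensor (14) of the paper. -/
def RicPar (n : ℕ) (f g : ℝ → ℝ) (t : ℝ) : ℝ :=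
  ((n : ℝ) - 1) * (2 * deriv (fun u => f u + deriv f u * u) t / f t
    - (deriv f t / f t + deriv g t / g t) * (f t + deriv f t * t) / f t)

/-- Ricci tensor of the Lorentz invariant metric `g_{αβ} = fΠ⊥ + gΠ∥`. -/
def RicciField {n : ℕ} (f g : ℝ → ℝ) (x : Fin n → ℝ) (α β : Fin n) : ℝ :=
  RicPerp n f g (sfun x) * Pperp x α β + RicPar n f g (sfun x) * Ppar x α β

lemma alg_core (N t Λ K A D F G Fp Gp : ℝ) (ht : t ≠ 0) (hF : F ≠ 0) (hG : G ≠ 0)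
    (hN1 : N - 1 ≠ 0) (hN2 : N - 2 ≠ 0) (hN : N ≠ 0) (hΛ : Λ = -(2*K/N)) :
    ((N-2)/t * (A^2/(F*G) - 1) + 2*D/G - (Fp/F + Gp/G)*A/G = Λ*F ∧
     (N-1)*(2*D/F - (Fp/F + Gp/G)*A/F) = Λ*G)
    ↔ (A^2/(t*G) - F/t = -(2*K/(N*(N-1))) * F^2 ∧
       2*D - (Fp/F + Gp/G)*A = -(2*K/(N*(N-1))) * F * G) := by
  subst hΛ
  constructor <;> rintro ⟨h1, h2⟩ <;> field_simp at h1 h2 ⊢ <;> constructor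
  · refine mul_left_cancel₀ (a := (N-2)*F*G^3)
      (mul_ne_zero (mul_ne_zero hN2 hF) (pow_ne_zero _ hG)) ?_
    linear_combination F*G^2*((N-1)*h1 - t*h2)
  · refine mul_left_cancel₀ (a := F) hF ?_
    linear_combination F*h2
  · refine mul_left_cancel₀ (a := t*(N-1)) (mul_ne_zero ht hN1) ?_
    linear_combination t*G*(N-2)*h1 + t^2*h2
  · linear_combination h2

def evec (n : ℕ) (j : Fin n) (c : ℝ) : Fin n → ℝ := fun i => if i = j then c else 0

lemma xlow_evec (n : ℕ) (j : Fin n) (c : ℝ) (i : Fin n) :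
    xlow (evec n j c) i = if i = j then (if (j : ℕ) = 0 then 1 else -1) * c else 0 := by
  simp only [xlow, eta, evec, Matrix.mulVec_diagonal]
  by_cases h : i = j <;> simp [h]

lemma sfun_evec (n : ℕ) (j : Fin n) (c : ℝ) :
    sfun (evec n j c) = (if (j : ℕ) = 0 then 1 else -1) * c ^ 2 := by
  simp only [sfun, dotProduct, eta, Matrix.mulVec_diagonal]
  rw [Finset.sum_eq_single j]
  · simp [evec]; ring
  · intro i _ hij; simp [evec, hij]
  · intro h; exact absurd (Finset.mem_univ j) h

lemma exists_vec (n : ℕ) (hn : 3 ≤ n) (t : ℝ) (ht : t ≠ 0) :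
    ∃ x : Fin n → ℝ, sfun x = t ∧ ∃ α β : Fin n,
      Pperp x α α = 0 ∧ Ppar x α α ≠ 0 ∧ Pperp x β β ≠ 0 ∧ Ppar x β β = 0 := by
  have h01 : (⟨0, by omega⟩ : Fin n) ≠ ⟨1, by omega⟩ := by simp [Fin.ext_iff]
  rcases lt_or_gt_of_ne ht with hneg | hpos
  · -- t < 0 : use j = 1
    set j : Fin n := ⟨1, by omega⟩ with hj
    set β : Fin n := ⟨0, by omega⟩ with hβ
    set c := Real.sqrt (-t) with hc
    have hc2 : c ^ 2 = -t := Real.sq_sqrt (by linarith)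
    have hdj : ((j : ℕ) = 0) = False := by simp [hj]
    refine ⟨evec n j c, ?_, j, β, ?_, ?_, ?_, ?_⟩
    · rw [sfun_evec, hc2]; simp [hdj]
    · simp only [Pperp, eta, Matrix.diagonal_apply_eq, xlow_evec, hdj, if_true, eq_self_iff_true]
      rw [sfun_evec]
      simp only [hdj, if_false, if_true, eq_self_iff_true]
      have hcne : c ≠ 0 := by
        rw [hc]; exact Real.sqrt_ne_zero'.mpr (by linarith)
      field_simp
      ring
    · simp only [Ppar, xlow_evec, eq_self_iff_true, if_true]
      rw [sfun_evec]
      simp only [hdj, if_false]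
      have : c ≠ 0 := by
        rw [hc]; exact Real.sqrt_ne_zero'.mpr (by linarith)
      field_simp
      norm_num
    · simp only [Pperp, eta, Matrix.diagonal_apply_eq, xlow_evec]
      have : β ≠ j := h01
      simp [this, hβ, hj]
    · simp only [Ppar, xlow_evec]
      have : β ≠ j := h01
      simp [this]
  · -- t > 0 : use j = 0
    set j : Fin n := ⟨0, by omega⟩ with hj
    set β : Fin n := ⟨1, by omega⟩ with hβ
    set c := Real.sqrt t with hc
    have hc2 : c ^ 2 = t := Real.sq_sqrt (by linarith)
    have hdj : ((j : ℕ) = 0) = True := by simp [hj]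
    refine ⟨evec n j c, ?_, j, β, ?_, ?_, ?_, ?_⟩
    · rw [sfun_evec, hc2]; simp [hdj]
    · simp only [Pperp, eta, Matrix.diagonal_apply_eq, xlow_evec, hdj, if_true, eq_self_iff_true]
      rw [sfun_evec]
      simp only [hdj, if_true]
      have hcne : c ≠ 0 := by
        rw [hc]; exact Real.sqrt_ne_zero'.mpr (by linarith)
      field_simp
      ring
    · simp only [Ppar, xlow_evec, eq_self_iff_true, if_true]
      rw [sfun_evec]
      simp only [hdj, if_true]
      have : c ≠ 0 := by
        rw [hc]; exact Real.sqrt_ne_zero'.mpr (by linarith)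
      field_simp
      norm_num
    · simp only [Pperp, eta, Matrix.diagonal_apply_eq, xlow_evec]
      have : β ≠ j := h01.symm
      simp [this, hβ, hj]
    · simp only [Ppar, xlow_evec]
      have : β ≠ j := h01.symm
      simp [this]

/-- For the Lorentz invariant metric, the vacuum Einstein equations `R_{αβ} = Λ g_{αβ}`
with `Λ = -2K/n` are equivalent to the constant curvature ODEs (11), (12); in particular
every Lorentz invariant vacuum solution has constant curvature. -/
theorem einstein_iff_constant_curvature {n : ℕ} (hn : 3 ≤ n) (Λ K : ℝ)
    (hΛ : Λ = -(2 * K / n)) (f g : ℝ → ℝ)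
    (hf : ContDiff ℝ (⊤ : ℕ∞) f) (hg : ContDiff ℝ (⊤ : ℕ∞) g)
    (hf0 : ∀ t, f t ≠ 0) (hg0 : ∀ t, g t ≠ 0) :
    (∀ (x : Fin n → ℝ), sfun x ≠ 0 → ∀ α β,
        RicciField f g x α β = Λ * Gfield f g x α β)
    ↔ (∀ t : ℝ, t ≠ 0 →
        ((f t + deriv f t * t) ^ 2 / (t * g t) - f t / t
            = -(2 * K / (n * (n - 1))) * f t ^ 2) ∧
        (2 * deriv (fun u => f u + deriv f u * u) t
            - (deriv f t / f t + deriv g t / g t) * (f t + deriv f t * t)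
            = -(2 * K / (n * (n - 1))) * f t * g t)) := by
  have hn3 : (3 : ℝ) ≤ (n : ℝ) := by exact_mod_cast hn
  have hN : (n : ℝ) ≠ 0 := by linarith
  have hN1 : (n : ℝ) - 1 ≠ 0 := by intro h; nlinarith [h]
  have hN2 : (n : ℝ) - 2 ≠ 0 := by intro h; nlinarith [h]
  have key : ∀ t : ℝ, t ≠ 0 →
      ((RicPerp n f g t = Λ * f t ∧ RicPar n f g t = Λ * g t) ↔
        ((f t + deriv f t * t) ^ 2 / (t * g t) - f t / t
            = -(2 * K / (n * (n - 1))) * f t ^ 2 ∧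
        2 * deriv (fun u => f u + deriv f u * u) t
            - (deriv f t / f t + deriv g t / g t) * (f t + deriv f t * t)
            = -(2 * K / (n * (n - 1))) * f t * g t)) := by
    intro t ht
    simpa only [RicPerp, RicPar] using
      alg_core (n : ℝ) t Λ K (f t + deriv f t * t)
        (deriv (fun u => f u + deriv f u * u) t) (f t) (g t)
        (deriv f t) (deriv g t) ht (hf0 t) (hg0 t) hN1 hN2 hN hΛ
  constructor
  · intro H t ht
    obtain ⟨x, hsx, α, β, hpα, hqα, hpβ, hqβ⟩ := exists_vec n hn t ht
    have hsx' : sfun x ≠ 0 := by rw [hsx]; exact ht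
    have Hα := H x hsx' α α
    have Hβ := H x hsx' β β
    simp only [RicciField, Gfield, Matrix.add_apply, Matrix.smul_apply, smul_eq_mul,
      hsx, hpα, hqα, hpβ, hqβ, mul_zero, zero_add, add_zero] at Hα Hβ
    have h2 : RicPar n f g t = Λ * g t := by
      have := mul_right_cancel₀ hqα (by linarith [Hα] : RicPar n f g t * Ppar x α α
        = (Λ * g t) * Ppar x α α)
      exact this
    have h1 : RicPerp n f g t = Λ * f t := by
      have := mul_right_cancel₀ hpβ (by linarith [Hβ] : RicPerp n f g t * Pperp x β β
        = (Λ * f t) * Pperp x β β)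
      exact this
    exact (key t ht).mp ⟨h1, h2⟩
  · intro H x hs α β
    obtain ⟨h1, h2⟩ := (key _ hs).mpr (H _ hs)
    simp only [RicciField, Gfield, Matrix.add_apply, Matrix.smul_apply, smul_eq_mul]
    rw [h1, h2]
    ring
end
end
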